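/- arXiv:2208.11043 — 2 statements merged into one kernel-verified Lean document; each statement's English description precedes it below -/
import Mathlib

section
/- Let λ : ℝ → ℝ be nondecreasing, n ≥ 1, and let 0 ≤ T₁ ≤ ... ≤ T_N ≤ t with the convention T_k = 0 for k ≤ 0. Suppose the N failure times T₁,...,T_N are partitioned among n components: there is a function c : {1,...,N} → {1,...,n} assigning each failure to a component, and for each component i let L_i = max{T_k : c(k) = i} (with L_i = 0 if component i has no failures). Then ∑_{i=0}^{n-1} λ(t - T_{N-i}) ≤ ∑_{i=1}^{n} λ(t - L_i). -/
/-- Lower bound of Proposition 1: for masked failure data `T 1 ≤ ... ≤ T N ≤ t`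
(with the convention `T k = 0` for `k ≤ 0`), any assignment `c` of failures to the
`n` components, and `L i` the last failure time of component `i` (0 if none),
the sum of the renewed intensities dominates `∑_{i=0}^{n-1} λ(t - T_{N-i})`. -/
theorem stmt_1 (lam : ℝ → ℝ) (hlam : Monotone lam) (n : ℕ) (hn : 1 ≤ n)
    (T : ℤ → ℝ) (hT : Monotone T) (hT0 : ∀ k : ℤ, k ≤ 0 → T k = 0)
    (N : ℕ) (t : ℝ) (ht : T (N : ℤ) ≤ t)
    (c : ℤ → Fin n) (L : Fin n → ℝ)
    (hL : ∀ i : Fin n,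
      L i = (((Finset.Icc (1 : ℤ) (N : ℤ)).filter (fun k => c k = i)).fold max 0 T)) :
    ∑ i ∈ Finset.range n, lam (t - T ((N : ℤ) - (i : ℤ))) ≤
      ∑ i : Fin n, lam (t - L i) := by
  have hx0 : ∀ i : ℕ, (0 : ℝ) ≤ T ((N : ℤ) - i) := by
    intro i
    rcases le_or_gt ((N : ℤ) - i) 0 with h | h
    · rw [hT0 _ h]
    · calc (0 : ℝ) = T 0 := (hT0 0 le_rfl).symm
        _ ≤ T _ := hT h.le
  -- counting: at most i components have last failure time > T (N - i)
  have hcard : ∀ i : ℕ,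
      (Finset.univ.filter (fun j : Fin n => T ((N : ℤ) - i) < L j)).card ≤ i := by
    intro i
    set x := T ((N : ℤ) - i) with hxdef
    have hwit : ∀ j : Fin n, x < L j →
        ∃ k, k ∈ Finset.Icc (1 : ℤ) (N : ℤ) ∧ c k = j ∧ x < T k := by
      intro j hj'
      rw [hL j] at hj'
      by_contra hcon
      push_neg at hcon
      have hle : ((Finset.Icc (1 : ℤ) (N : ℤ)).filter (fun k => c k = j)).fold max 0 T ≤ x := by
        rw [Finset.fold_max_le]
        refine ⟨hx0 i, ?_⟩
        intro k hk
        rw [Finset.mem_filter] at hk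
        exact hcon k hk.1 hk.2
      linarith
    choose k hk1 hk2 hk3 using hwit
    have hcle := Finset.card_le_card_of_injOn
      (s := Finset.univ.filter (fun j : Fin n => x < L j))
      (f := fun j : Fin n => if h : x < L j then k j h else 0)
      (t := Finset.Ioc ((N : ℤ) - i) (N : ℤ)) ?_ ?_
    · calc (Finset.univ.filter (fun j : Fin n => x < L j)).card
          ≤ (Finset.Ioc ((N : ℤ) - i) (N : ℤ)).card := hcle
        _ = i := by rw [Int.card_Ioc]; omega
    · intro j hj
      rw [Finset.coe_filter, Set.mem_setOf_eq] at hj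
      have h := hj.2
      simp only [dif_pos h]
      have h1 := hk1 j h
      have h3 := hk3 j h
      rw [Finset.mem_Icc] at h1
      rw [Finset.mem_coe, Finset.mem_Ioc]
      refine ⟨?_, h1.2⟩
      by_contra hle
      push_neg at hle
      exact absurd (hT hle) (by rw [← hxdef]; linarith)
    · intro a ha b hb hab
      rw [Finset.coe_filter, Set.mem_setOf_eq] at ha hb
      have ha' := ha.2
      have hb' := hb.2
      simp only [dif_pos ha', dif_pos hb'] at hab
      have := hk2 a ha'
      rw [hab, hk2 b hb'] at this
      exact this.symm
  -- sort L increasingly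
  set σ := Tuple.sort L with hσ
  have hmono : Monotone (L ∘ σ) := Tuple.monotone_sort L
  have hkey : ∀ i : Fin n, L (σ (Fin.rev i)) ≤ T ((N : ℤ) - i) := by
    intro i
    by_contra hcon
    push_neg at hcon
    -- all σ a with a ≥ i.rev are in the filter set
    have hsub : Finset.image σ (Finset.Ici (Fin.rev i)) ⊆
        Finset.univ.filter (fun j : Fin n => T ((N : ℤ) - (i : ℤ)) < L j) := by
      intro j hj
      rw [Finset.mem_image] at hj
      obtain ⟨a, ha, rfl⟩ := hj
      rw [Finset.mem_Ici] at ha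
      rw [Finset.mem_filter]
      exact ⟨Finset.mem_univ _, lt_of_lt_of_le hcon (hmono ha)⟩
    have h1 : (Finset.image σ (Finset.Ici (Fin.rev i))).card = (i : ℕ) + 1 := by
      rw [Finset.card_image_of_injective _ σ.injective, Fin.card_Ici, Fin.val_rev]
      omega
    have h2 := Finset.card_le_card hsub
    have h3 := hcard (i : ℕ)
    rw [h1] at h2
    have : (i : ℤ) = ((i : ℕ) : ℤ) := rfl
    omega
  calc ∑ i ∈ Finset.range n, lam (t - T ((N : ℤ) - (i : ℤ)))
      = ∑ i : Fin n, lam (t - T ((N : ℤ) - (i : ℤ))) :=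
        (Fin.sum_univ_eq_sum_range (fun i => lam (t - T ((N : ℤ) - (i : ℤ)))) n).symm
    _ ≤ ∑ i : Fin n, lam (t - L (σ (Fin.rev i))) := by
        refine Finset.sum_le_sum fun i _ => hlam ?_
        have := hkey i
        linarith
    _ = ∑ i : Fin n, lam (t - L i) := by
        exact Equiv.sum_comp ((Fin.revPerm).trans σ) (fun j => lam (t - L j))
end

section
/- Let λ : ℝ → ℝ be nondecreasing and nonnegative, n ≥ 1, and let 0 ≤ T₁ ≤ ... ≤ T_N ≤ t, with convention T_k = 0 for k ≤ 0. For any assignment c : {1,...,N} → {1,...,n} of failures to components, with L_i the last failure time of component i (L_i = 0 if none), the system intensity λ_s(t) = ∑_{i=1}^n λ(t - L_i) satisfies ∑_{i=0}^{n-1} λ(t - T_{N-i}) ≤ λ_s(t) ≤ (n-1)λ(t) + λ(t - T_N) when N ≥ 1. -/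
/-!
Sort the components by decreasing last failure time. If the `j`-th largest of the `L i` exceeded
`T (N - j)`, then `j + 1` components would each have failed at some time after `T (N - j)`, i.e.
at one of the `j` indices `N - j + 1, …, N`, which is impossible since every failure belongs to a
single component. Hence the `j`-th largest `L i` is at most `T (N - j)`, and monotonicity of `λ`
gives the lower bound. For the upper bound, the component that failed at `T N` has `L ≥ T N`, and
every other one contributes at most `λ t` because `L ≥ 0`.
-/

open Finset

section Rearrangement

variable {α β : Type*} [LinearOrder α] {n : ℕ}

theorem exists_perm_le_of_card_lt_le (x b : Fin n → α)
    (h : ∀ j, #{i | b j < x i} ≤ j) : ∃ π : Equiv.Perm (Fin n), ∀ j, x (π j) ≤ b j := by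
  set π : Equiv.Perm (Fin n) := Fin.revPerm.trans (Tuple.sort x)
  have hπ : Antitone (x ∘ π) := fun _ _ hj ↦ Tuple.monotone_sort x (Fin.rev_le_rev.mpr hj)
  refine ⟨π, fun j ↦ not_lt.mp fun hj ↦ ?_⟩
  have hsub : (Iic j).image π ⊆ ({i | b j < x i} : Finset _) := by
    simp only [subset_iff, mem_image, mem_Iic, mem_filter_univ]
    rintro _ ⟨m, hm, rfl⟩
    exact hj.trans_le (hπ hm)
  have := card_le_card hsub
  rw [card_image_of_injective _ π.injective, Fin.card_Iic] at this
  exact absurd (this.trans (h j)) (by omega)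

theorem sum_le_sum_of_card_lt_le [AddCommMonoid β] [PartialOrder β] [IsOrderedAddMonoid β]
    {g : α → β} (hg : Antitone g) (x b : Fin n → α) (h : ∀ j, #{i | b j < x i} ≤ j) :
    ∑ j, g (b j) ≤ ∑ i, g (x i) := by
  obtain ⟨π, hπ⟩ := exists_perm_le_of_card_lt_le x b h
  calc ∑ j, g (b j) ≤ ∑ j, g (x (π j)) := sum_le_sum fun j _ ↦ hg (hπ j)
    _ = ∑ i, g (x i) := Equiv.sum_comp π (g ∘ x)

end Rearrangement

theorem Fin.sum_le_sub_one_mul_add {n : ℕ} {f : Fin n → ℝ} {M m : ℝ} (hM : ∀ i, f i ≤ M)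
    (i₀ : Fin n) (hm : f i₀ ≤ m) : ∑ i, f i ≤ ((n : ℝ) - 1) * M + m := by
  have hrest : ∑ i ∈ univ.erase i₀, f i ≤ ((n : ℝ) - 1) * M := by
    have := sum_le_card_nsmul _ _ _ fun i (_ : i ∈ univ.erase i₀) ↦ hM i
    rwa [card_erase_of_mem (mem_univ i₀), card_univ, Fintype.card_fin, nsmul_eq_mul,
      Nat.cast_pred i₀.pos] at this
  rw [← add_sum_erase _ _ (mem_univ i₀)]
  linarith

section LastFailure

variable {ι : Type*} [DecidableEq ι] (T : ℤ → ℝ) (c : ℤ → ι) (N : ℕ)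

noncomputable def lastFailure (i : ι) : ℝ := ({k ∈ Icc (1 : ℤ) N | c k = i}).fold max 0 T

variable {T c N}

theorem lastFailure_nonneg (i : ι) : 0 ≤ lastFailure T c N i :=
  (le_fold_max _).mpr (Or.inl le_rfl)

theorem le_lastFailure (hT0 : ∀ k : ℤ, k ≤ 0 → T k = 0) {k : ℤ} (hk : k ≤ N) :
    T k ≤ lastFailure T c N (c k) := by
  rcases le_or_gt k 0 with hk0 | hk0
  · exact (hT0 k hk0).trans_le (lastFailure_nonneg _)
  · have hmem : k ∈ {l ∈ Icc (1 : ℤ) N | c l = c k} :=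
      mem_filter.mpr ⟨mem_Icc.mpr ⟨hk0, hk⟩, rfl⟩
    exact (le_fold_max _).mpr (Or.inr ⟨k, hmem, le_rfl⟩)

theorem exists_mem_Ioc_of_lt_lastFailure (hT : Monotone T) {m : ℤ} (hm : 0 ≤ T m) {i : ι}
    (h : T m < lastFailure T c N i) : ∃ k ∈ Ioc m N, c k = i := by
  obtain ⟨k, hk, hTk⟩ := ((lt_fold_max _).mp h).resolve_left hm.not_gt
  rw [mem_filter, mem_Icc] at hk
  exact ⟨k, mem_Ioc.mpr ⟨hT.reflect_lt hTk, hk.1.2⟩, hk.2⟩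

theorem card_lt_lastFailure_le [Fintype ι] (hT : Monotone T)
    (hT0 : ∀ k : ℤ, k ≤ 0 → T k = 0) (j : ℕ) :
    #{i | T (N - j) < lastFailure T c N i} ≤ j := by
  have hnonneg : 0 ≤ T (N - j) :=
    (hT0 _ (min_le_right _ 0)).symm.trans_le (hT (min_le_left _ _))
  have hsub : ({i | T (N - j) < lastFailure T c N i} : Finset ι) ⊆
      (Ioc ((N : ℤ) - j) N).image c := by
    intro i hi
    obtain ⟨k, hk, rfl⟩ := exists_mem_Ioc_of_lt_lastFailure hT hnonneg (mem_filter.mp hi).2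
    exact mem_image_of_mem c hk
  calc _ ≤ _ := card_le_card hsub
    _ ≤ #(Ioc ((N : ℤ) - j) N) := card_image_le
    _ = j := by simp

end LastFailure

theorem stmt_3_general (lam : ℝ → ℝ) (hlam : Monotone lam)
    (n : ℕ)
    (T : ℤ → ℝ) (hT : Monotone T) (hT0 : ∀ k : ℤ, k ≤ 0 → T k = 0)
    (N : ℕ) (t : ℝ)
    (c : ℤ → Fin n) (L : Fin n → ℝ)
    (hL : ∀ i : Fin n,
      L i = (((Finset.Icc (1 : ℤ) (N : ℤ)).filter (fun k => c k = i)).fold max 0 T)) :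
    ∑ i ∈ Finset.range n, lam (t - T ((N : ℤ) - (i : ℤ))) ≤ ∑ i : Fin n, lam (t - L i)
      ∧ ∑ i : Fin n, lam (t - L i) ≤ ((n : ℝ) - 1) * lam t + lam (t - T (N : ℤ)) := by
  obtain rfl : L = lastFailure T c N := funext hL
  have hg : Antitone fun s ↦ lam (t - s) := fun _ _ h ↦ hlam (sub_le_sub_left h t)
  constructor
  · rw [sum_range fun i ↦ lam (t - T (N - i))]
    exact sum_le_sum_of_card_lt_le hg _ _ fun j ↦ card_lt_lastFailure_le hT hT0 j
  · exact Fin.sum_le_sub_one_mul_add (fun i ↦ hlam (sub_le_self t (lastFailure_nonneg i)))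
      (c N) (hg (le_lastFailure hT0 le_rfl))

/-- Proposition 1 (combined form): lower and upper bounds on the rate of a
superimposed renewal process of `n` identical components with common nondecreasing
failure rate `λ`, in terms of the masked system failure times only. -/
theorem stmt_3 (lam : ℝ → ℝ) (hlam : Monotone lam) (hpos : ∀ s, 0 ≤ lam s)
    (n : ℕ) (hn : 1 ≤ n)
    (T : ℤ → ℝ) (hT : Monotone T) (hT0 : ∀ k : ℤ, k ≤ 0 → T k = 0) (hT1 : 0 ≤ T 1)
    (N : ℕ) (hN : 1 ≤ N) (t : ℝ) (ht : T (N : ℤ) ≤ t)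
    (c : ℤ → Fin n) (L : Fin n → ℝ)
    (hL : ∀ i : Fin n,
      L i = (((Finset.Icc (1 : ℤ) (N : ℤ)).filter (fun k => c k = i)).fold max 0 T)) :
    ∑ i ∈ Finset.range n, lam (t - T ((N : ℤ) - (i : ℤ))) ≤ ∑ i : Fin n, lam (t - L i)
      ∧ ∑ i : Fin n, lam (t - L i) ≤ ((n : ℝ) - 1) * lam t + lam (t - T (N : ℤ)) :=
  stmt_3_general lam hlam n T hT hT0 N t c L hL
end
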